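/- Convexity of the MHD entropy: for γ > 1, the entropy function g(U) := −ρ log( p ρ^{−γ} ), where p := (γ−1) 𝓔(U), is a convex function on the open convex set G ⊂ ℝ⁸, and its Hessian matrix ∇²g(U) is positive definite at every U ∈ G. -/

import Mathlib

/-!
With `ρ, m, 𝓔` the density, momentum and internal energy of `U`, `g = -ρ log((γ - 1) 𝓔 ρ^(-γ))`.
Along the line `t ↦ U + t V`, with `r, w, b` the density, momentum and magnetic components of `V`,
  `g'' = (γ - 1) r² / ρ + ρ (r / ρ - 𝓔' / 𝓔)² + ρ (-𝓔'') / 𝓔`,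
  `-𝓔'' = |w - (r / ρ) m|² / ρ + |b|²`,
a sum of nonnegative terms that vanish together only for `V = 0` (once `r, w, b` vanish, `𝓔'` is
the energy component of `V`). In particular `𝓔` is concave on `{ρ > 0}`, so `G` is convex; `g` is
convex by the second-derivative test on segments, and its Hessian form at `U` is `g''` at `t = 0`.
-/

noncomputable section
namespace IdealMHD

/-- A conservative MHD state `U = (ρ, m, B, E)` identified with a vector in `ℝ⁸`. -/
abbrev State := Fin 8 → ℝ

/-- density ρ -/
def dens (U : State) : ℝ := U 0

/-- momentum components `m i`, `i = 0,1,2` -/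
def mom (U : State) (i : Fin 3) : ℝ := U ⟨i.1 + 1, by omega⟩

/-- magnetic field components `B i`, `i = 0,1,2` -/
def mag (U : State) (i : Fin 3) : ℝ := U ⟨i.1 + 4, by omega⟩

/-- total energy E -/
def toten (U : State) : ℝ := U 7

/-- squared Euclidean norm of a 3-vector -/
def sq3 (v : Fin 3 → ℝ) : ℝ := ∑ i, v i ^ 2

/-- Euclidean dot product of 3-vectors -/
def dot3 (v w : Fin 3 → ℝ) : ℝ := ∑ i, v i * w i

/-- Euclidean norm of a 3-vector -/
def norm3 (v : Fin 3 → ℝ) : ℝ := Real.sqrt (sq3 v)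

/-- internal energy `𝓔(U) = E − |m|²/(2ρ) − |B|²/2` -/
def intE (U : State) : ℝ := toten U - sq3 (mom U) / (2 * dens U) - sq3 (mag U) / 2

/-- admissible set `G = { U : ρ > 0, 𝓔(U) > 0 }` -/
def Adm : Set State := {U | 0 < dens U ∧ 0 < intE U}

/-- Euclidean dot product in `ℝ⁸` -/
def dot8 (U V : State) : ℝ := ∑ i, U i * V i

/-- the vector `n₁ = (1,0,0,0,0,0,0,0)` -/
def n1 : State := ![1, 0, 0, 0, 0, 0, 0, 0]

/-- the GQL vector `n* = (|u*|²/2, −u*, −B*, 1)` -/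
def nstar (us Bs : Fin 3 → ℝ) : State :=
  ![sq3 us / 2, -us 0, -us 1, -us 2, -Bs 0, -Bs 1, -Bs 2, 1]

/-- the ℓ-th directional ideal MHD flux `F_ℓ(U)` (with ideal-gas EOS of index γ) -/
def flux (γ : ℝ) (ℓ : Fin 3) (U : State) : State :=
  let u : Fin 3 → ℝ := fun i => mom U i / dens U
  let ptot : ℝ := (γ - 1) * intE U + sq3 (mag U) / 2
  ![mom U ℓ,
    mom U ℓ * u 0 - mag U ℓ * mag U 0 + (if ℓ = 0 then ptot else 0),
    mom U ℓ * u 1 - mag U ℓ * mag U 1 + (if ℓ = 1 then ptot else 0),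
    mom U ℓ * u 2 - mag U ℓ * mag U 2 + (if ℓ = 2 then ptot else 0),
    u ℓ * mag U 0 - mag U ℓ * u 0,
    u ℓ * mag U 1 - mag U ℓ * u 1,
    u ℓ * mag U 2 - mag U ℓ * u 2,
    u ℓ * (toten U + ptot) - mag U ℓ * dot3 u (mag U)]

/-- `C_s = p/(ρ√(2e))` with `p = (γ−1)ρe`, `e = 𝓔(U)/ρ` -/
def soundC (γ : ℝ) (U : State) : ℝ :=
  (γ - 1) * intE U / (dens U * Real.sqrt (2 * (intE U / dens U)))

/-- the discriminant `(C_s² + |B|²/ρ)² − 4 C_s² B_ℓ²/ρ` -/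
def discrim (γ : ℝ) (ℓ : Fin 3) (U : State) : ℝ :=
  (soundC γ U ^ 2 + sq3 (mag U) / dens U) ^ 2 -
    4 * soundC γ U ^ 2 * mag U ℓ ^ 2 / dens U

/-- the fast speed bound `C_ℓ` -/
def fastC (γ : ℝ) (ℓ : Fin 3) (U : State) : ℝ :=
  (1 / Real.sqrt 2) *
    Real.sqrt (soundC γ U ^ 2 + sq3 (mag U) / dens U + Real.sqrt (discrim γ ℓ U))

/-- the viscosity coefficient `α_ℓ(U, Ũ)` -/
def alphaSpeed (γ : ℝ) (ℓ : Fin 3) (U Ut : State) : ℝ :=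
  max
    (max (|mom U ℓ / dens U| + fastC γ ℓ U) (|mom Ut ℓ / dens Ut| + fastC γ ℓ Ut))
    ((Real.sqrt (dens U) * (mom U ℓ / dens U) +
        Real.sqrt (dens Ut) * (mom Ut ℓ / dens Ut)) /
        (Real.sqrt (dens U) + Real.sqrt (dens Ut)) +
      max (fastC γ ℓ U) (fastC γ ℓ Ut)) +
  norm3 (fun i => mag U i - mag Ut i) / (Real.sqrt (dens U) + Real.sqrt (dens Ut))

/-- the MHD entropy function `g(U) = −ρ log(p ρ^{−γ})` with `p = (γ−1)𝓔(U)`. -/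
def entropyFn (γ : ℝ) (U : State) : ℝ :=
  -dens U * Real.log ((γ - 1) * intE U * Real.rpow (dens U) (-γ))

end IdealMHD

open Filter Topology

section LineDeriv

variable {𝕜 E F : Type*} [NontriviallyNormedField 𝕜] [NormedAddCommGroup E] [NormedSpace 𝕜 E]
  [NormedAddCommGroup F] [NormedSpace 𝕜 F]

lemma HasLineDerivAt.hasDerivAt_add_smul {f : E → F} {f' : F} {x v : E} {t : 𝕜}
    (h : HasLineDerivAt 𝕜 f f' (x + t • v) v) : HasDerivAt (fun s => f (x + s • v)) f' t := by
  have h' : HasDerivAt (fun s => f (x + t • v + (s - t) • v)) f' t := by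
    simpa using HasDerivAt.comp_sub_const t t (by rwa [sub_self])
  convert h' using 3 with s
  rw [sub_smul]; abel

end LineDeriv

section SecondLineDeriv

variable {E : Type*} [NormedAddCommGroup E] [NormedSpace ℝ E]

theorem convexOn_of_hasLineDerivAt2_nonneg {s : Set E} (hs : IsOpen s) (hconv : Convex ℝ s)
    {f : E → ℝ} {f' f'' : E → E → ℝ}
    (hf' : ∀ x ∈ s, ∀ v, HasLineDerivAt ℝ f (f' x v) x v)
    (hf'' : ∀ x ∈ s, ∀ v, HasLineDerivAt ℝ (f' · v) (f'' x v) x v)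
    (hf''₀ : ∀ x ∈ s, ∀ v, 0 ≤ f'' x v) : ConvexOn ℝ s f := by
  refine ⟨hconv, fun x hx y hy a b ha hb hab => ?_⟩
  set D := AffineMap.lineMap (k := ℝ) x y ⁻¹' s
  have hline : ∀ t : ℝ, AffineMap.lineMap x y t = x + t • (y - x) := fun t => by
    rw [AffineMap.lineMap_apply_module', add_comm]
  have hD : IsOpen D := hs.preimage AffineMap.lineMap_continuous
  have hderiv : ∀ t ∈ D, HasDerivAt (fun t => f (x + t • (y - x))) (f' (x + t • (y - x)) (y - x)) t
      ∧ HasDerivAt (fun t => f' (x + t • (y - x)) (y - x)) (f'' (x + t • (y - x)) (y - x)) t := by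
    intro t ht
    rw [Set.mem_preimage, hline] at ht
    exact ⟨(hf' _ ht _).hasDerivAt_add_smul, (hf'' _ ht _).hasDerivAt_add_smul⟩
  have hg : ConvexOn ℝ D fun t => f (x + t • (y - x)) := by
    refine convexOn_of_hasDerivWithinAt2_nonneg (hconv.affine_preimage _)
      (f' := fun t => f' (x + t • (y - x)) (y - x)) (f'' := fun t => f'' (x + t • (y - x)) (y - x))
      (fun t ht => (hderiv t ht).1.continuousAt.continuousWithinAt) ?_ ?_ ?_ <;>
      rw [hD.interior_eq]
    · exact fun t ht => (hderiv t ht).1.hasDerivWithinAt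
    · exact fun t ht => (hderiv t ht).2.hasDerivWithinAt
    · intro t ht
      rw [Set.mem_preimage, hline] at ht
      exact hf''₀ _ ht _
  have h0 : (0 : ℝ) ∈ D := by simpa [D] using hx
  have h1 : (1 : ℝ) ∈ D := by simpa [D] using hy
  have := hg.2 h0 h1 ha hb hab
  simp only [smul_eq_mul, mul_zero, mul_one, zero_add, zero_smul, add_zero, one_smul,
    add_sub_cancel] at this
  rw [smul_eq_mul, smul_eq_mul]
  convert this using 2
  rw [← hline, AffineMap.lineMap_apply_module, ← eq_sub_of_add_eq hab]

theorem iteratedFDeriv_two_apply_eq_of_hasLineDerivAt {f g : E → ℝ} {x v : E} {c : ℝ}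
    (hf : ContDiffAt ℝ 2 f x) (hg : ∀ᶠ y in 𝓝 x, HasLineDerivAt ℝ f (g y) y v)
    (hc : HasLineDerivAt ℝ g c x v) : iteratedFDeriv ℝ 2 f x ![v, v] = c := by
  rw [iteratedFDeriv_two_apply]
  simp only [Matrix.cons_val_zero, Matrix.cons_val_one]
  have hdiff : DifferentiableAt ℝ (fderiv ℝ f) x :=
    (hf.fderiv_right (m := 1) (by norm_num)).differentiableAt one_ne_zero
  have hfderiv : (fun y => fderiv ℝ f y v) =ᶠ[𝓝 x] g := by
    filter_upwards [hf.eventually (by simp), hg] with y hfy hgy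
    exact ((hfy.differentiableAt (by norm_num)).hasFDerivAt.hasLineDerivAt v).unique hgy
  have := ((ContinuousLinearMap.apply ℝ ℝ v).hasFDerivAt.comp x hdiff.hasFDerivAt).hasLineDerivAt v
  exact this.unique (hc.congr_of_eventuallyEq hfderiv)

end SecondLineDeriv

namespace IdealMHD

lemma sq3_nonneg (a : Fin 3 → ℝ) : 0 ≤ sq3 a := by
  unfold sq3; positivity

lemma sq3_eq_zero_iff {a : Fin 3 → ℝ} : sq3 a = 0 ↔ a = 0 := by
  simp [sq3, Finset.sum_eq_zero_iff_of_nonneg, funext_iff, sq_nonneg]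

lemma hasDerivAt_sq3_add_smul (a b : Fin 3 → ℝ) (t : ℝ) :
    HasDerivAt (fun t => sq3 (a + t • b)) (2 * dot3 (a + t • b) b) t := by
  have := HasDerivAt.fun_sum (u := Finset.univ) fun i _ =>
    (((hasDerivAt_id t).mul_const (b i)).const_add (a i)).pow 2
  simpa [sq3, dot3, Finset.mul_sum, mul_assoc] using this

lemma hasDerivAt_dot3_add_smul (a b c : Fin 3 → ℝ) (t : ℝ) :
    HasDerivAt (fun t => dot3 (a + t • b) c) (dot3 b c) t := by
  have := HasDerivAt.fun_sum (u := Finset.univ) fun i _ =>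
    (((hasDerivAt_id t).mul_const (b i)).const_add (a i)).mul_const (c i)
  simpa [dot3] using this

def intE' (U V : State) : ℝ :=
  toten V - dot3 (mom U) (mom V) / dens U + sq3 (mom U) * dens V / (2 * dens U ^ 2)
    - dot3 (mag U) (mag V)

def intE'' (U V : State) : ℝ :=
  -(sq3 (mom V - (dens V / dens U) • mom U) / dens U) - sq3 (mag V)

lemma hasDerivAt_dens_add_smul (U V : State) (t : ℝ) :
    HasDerivAt (fun t => dens (U + t • V)) (dens V) t := by
  exact (hasDerivAt_mul_const (dens V)).const_add (dens U)

lemma hasDerivAt_toten_add_smul (U V : State) (t : ℝ) :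
    HasDerivAt (fun t => toten (U + t • V)) (toten V) t := by
  exact (hasDerivAt_mul_const (toten V)).const_add (toten U)

lemma hasLineDerivAt_intE {U : State} (hU : dens U ≠ 0) (V : State) :
    HasLineDerivAt ℝ intE (intE' U V) U V := by
  have h := ((hasDerivAt_toten_add_smul U V 0).sub
    ((hasDerivAt_sq3_add_smul (mom U) (mom V) 0).div
      ((hasDerivAt_dens_add_smul U V 0).const_mul 2) (by simpa using hU))).sub
    ((hasDerivAt_sq3_add_smul (mag U) (mag V) 0).div_const 2)
  refine h.congr_deriv ?_
  simp only [intE', zero_smul, add_zero]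
  field_simp
  ring

lemma hasLineDerivAt_intE' {U : State} (hU : dens U ≠ 0) (V : State) :
    HasLineDerivAt ℝ (intE' · V) (intE'' U V) U V := by
  have h := (((hasDerivAt_const (0:ℝ) (toten V)).sub
    ((hasDerivAt_dot3_add_smul (mom U) (mom V) (mom V) 0).div
      (hasDerivAt_dens_add_smul U V 0) (by simpa using hU))).add
    (((hasDerivAt_sq3_add_smul (mom U) (mom V) 0).mul_const (dens V)).div
      (((hasDerivAt_dens_add_smul U V 0).pow 2).const_mul 2) (by simpa using hU))).sub
    (hasDerivAt_dot3_add_smul (mag U) (mag V) (mag V) 0)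
  refine h.congr_deriv ?_
  simp only [intE'', sq3, dot3, Fin.sum_univ_three, zero_smul, add_zero, Pi.sub_apply,
    Pi.smul_apply, Pi.pow_apply, smul_eq_mul]
  field_simp
  ring

lemma intE''_nonpos {U : State} (hU : 0 < dens U) (V : State) : intE'' U V ≤ 0 := by
  have := div_nonneg (sq3_nonneg (mom V - (dens V / dens U) • mom U)) hU.le
  have := sq3_nonneg (mag V)
  unfold intE''
  linarith

lemma isOpen_dens_pos : IsOpen {U : State | 0 < dens U} :=
  isOpen_lt continuous_const (continuous_apply 0)

lemma convex_dens_pos : Convex ℝ {U : State | 0 < dens U} :=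
  convex_halfSpace_gt ⟨fun _ _ => rfl, fun _ _ => rfl⟩ 0

lemma concaveOn_intE : ConcaveOn ℝ {U : State | 0 < dens U} intE := by
  rw [← neg_convexOn_iff]
  exact convexOn_of_hasLineDerivAt2_nonneg isOpen_dens_pos convex_dens_pos
    (f' := fun U V => -intE' U V) (f'' := fun U V => -intE'' U V)
    (fun U hU V => HasDerivAt.neg (hasLineDerivAt_intE hU.ne' V))
    (fun U hU V => HasDerivAt.neg (hasLineDerivAt_intE' hU.ne' V))
    (fun U hU V => neg_nonneg.2 (intE''_nonpos hU V))

lemma contDiffAt_intE {n : ℕ∞} {U : State} (hU : dens U ≠ 0) : ContDiffAt ℝ n intE U := by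
  have h2ρ : (2 : ℝ) * U 0 ≠ 0 := mul_ne_zero two_ne_zero hU
  unfold intE sq3 toten mom mag dens
  fun_prop (disch := assumption)

lemma convex_adm : Convex ℝ Adm :=
  concaveOn_intE.convex_gt 0

lemma isOpen_adm : IsOpen Adm :=
  ContinuousOn.isOpen_inter_preimage
    (fun _ hU => (contDiffAt_intE (n := 0) (ne_of_gt hU)).continuousAt.continuousWithinAt)
    isOpen_dens_pos isOpen_Ioi

-- `entropyFn γ U` unfolds to `-dens U * specificEntropy γ U`.
def specificEntropy (γ : ℝ) (U : State) : ℝ :=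
  Real.log ((γ - 1) * intE U * Real.rpow (dens U) (-γ))

def entropyFn' (γ : ℝ) (U V : State) : ℝ :=
  -dens V * specificEntropy γ U - dens U * (intE' U V / intE U - γ * (dens V / dens U))

def entropyFn'' (γ : ℝ) (U V : State) : ℝ :=
  (γ - 1) * dens V ^ 2 / dens U + dens U * (dens V / dens U - intE' U V / intE U) ^ 2
    + dens U * -intE'' U V / intE U

lemma specificEntropy_eq {γ : ℝ} (hγ : γ ≠ 1) {U : State} (hU : U ∈ Adm) :
    specificEntropy γ U = Real.log (γ - 1) + Real.log (intE U) - γ * Real.log (dens U) := by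
  have hγ' : γ - 1 ≠ 0 := sub_ne_zero.2 hγ
  have hpow : Real.rpow (dens U) (-γ) ≠ 0 := (Real.rpow_pos_of_pos hU.1 _).ne'
  rw [specificEntropy, Real.log_mul (mul_ne_zero hγ' hU.2.ne') hpow, Real.log_mul hγ' hU.2.ne',
    Real.rpow_eq_pow, Real.log_rpow hU.1]
  ring

lemma hasLineDerivAt_specificEntropy {γ : ℝ} (hγ : γ ≠ 1) {U : State} (hU : U ∈ Adm)
    (V : State) :
    HasLineDerivAt ℝ (specificEntropy γ) (intE' U V / intE U - γ * (dens V / dens U)) U V := by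
  have heq : specificEntropy γ =ᶠ[𝓝 U]
      fun W => Real.log (γ - 1) + Real.log (intE W) - γ * Real.log (dens W) := by
    filter_upwards [isOpen_adm.mem_nhds hU] with W hW using specificEntropy_eq hγ hW
  refine HasLineDerivAt.congr_of_eventuallyEq ?_ heq
  have h := ((HasDerivAt.log (hasLineDerivAt_intE hU.1.ne' V) (by simpa using hU.2.ne')).const_add
    (Real.log (γ - 1))).sub
    (((hasDerivAt_dens_add_smul U V 0).log (by simpa using hU.1.ne')).const_mul γ)
  refine h.congr_deriv ?_
  simp only [zero_smul, add_zero]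

lemma hasLineDerivAt_entropyFn {γ : ℝ} (hγ : γ ≠ 1) {U : State} (hU : U ∈ Adm) (V : State) :
    HasLineDerivAt ℝ (entropyFn γ) (entropyFn' γ U V) U V := by
  refine ((hasDerivAt_dens_add_smul U V 0).neg.mul
    (hasLineDerivAt_specificEntropy hγ hU V)).congr_deriv ?_
  simp only [entropyFn', zero_smul, add_zero, Pi.neg_apply]
  ring

lemma hasLineDerivAt_entropyFn' {γ : ℝ} (hγ : γ ≠ 1) {U : State} (hU : U ∈ Adm) (V : State) :
    HasLineDerivAt ℝ (entropyFn' γ · V) (entropyFn'' γ U V) U V := by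
  have hρ : dens (U + (0:ℝ) • V) ≠ 0 := by simpa using hU.1.ne'
  have hε : intE (U + (0:ℝ) • V) ≠ 0 := by simpa using hU.2.ne'
  have h := ((hasDerivAt_const (0:ℝ) (-dens V)).mul
    (hasLineDerivAt_specificEntropy hγ hU V)).sub
    ((hasDerivAt_dens_add_smul U V 0).mul
      ((HasDerivAt.div (hasLineDerivAt_intE' hU.1.ne' V) (hasLineDerivAt_intE hU.1.ne' V) hε).sub
        (((hasDerivAt_const (0:ℝ) (dens V)).div (hasDerivAt_dens_add_smul U V 0) hρ).const_mul γ)))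
  refine h.congr_deriv ?_
  simp only [entropyFn'', zero_smul, add_zero, Pi.sub_apply, Pi.div_apply]
  field_simp [hU.1.ne', hU.2.ne']
  ring

lemma contDiffAt_entropyFn {n : ℕ∞} {γ : ℝ} (hγ : γ ≠ 1) {U : State} (hU : U ∈ Adm) :
    ContDiffAt ℝ n (entropyFn γ) U := by
  have hρ : ContDiffAt ℝ n dens U := contDiffAt_apply ℝ ℝ 0 U
  have harg : (γ - 1) * intE U * Real.rpow (dens U) (-γ) ≠ 0 :=
    mul_ne_zero (mul_ne_zero (sub_ne_zero.2 hγ) hU.2.ne') (Real.rpow_pos_of_pos hU.1 _).ne'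
  exact hρ.neg.mul (((contDiffAt_const.mul (contDiffAt_intE hU.1.ne')).mul
    (hρ.rpow_const_of_ne hU.1.ne')).log harg)

lemma eq_zero_of_dens_mom_mag_toten {V : State} (hρ : dens V = 0) (hm : mom V = 0)
    (hB : mag V = 0) (hE : toten V = 0) : V = 0 := by
  funext i
  fin_cases i
  exacts [hρ, congrFun hm 0, congrFun hm 1, congrFun hm 2, congrFun hB 0, congrFun hB 1,
    congrFun hB 2, hE]

lemma entropyFn''_pos {γ : ℝ} (hγ : 1 < γ) {U : State} (hU : U ∈ Adm) {V : State} (hV : V ≠ 0) :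
    0 < entropyFn'' γ U V := by
  obtain ⟨hρ, hε⟩ := hU
  have h1 : 0 ≤ (γ - 1) * dens V ^ 2 / dens U :=
    div_nonneg (mul_nonneg (sub_pos.2 hγ).le (sq_nonneg _)) hρ.le
  have h2 : 0 ≤ dens U * (dens V / dens U - intE' U V / intE U) ^ 2 :=
    mul_nonneg hρ.le (sq_nonneg _)
  have h3 : 0 ≤ dens U * -intE'' U V / intE U :=
    div_nonneg (mul_nonneg hρ.le (neg_nonneg.2 (intE''_nonpos hρ V))) hε.le
  rw [entropyFn'']
  refine lt_of_le_of_ne (by linarith) fun h => hV ?_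
  have hρV : dens V = 0 := by
    have : (γ - 1) * dens V ^ 2 / dens U = 0 := by linarith
    simpa [hρ.ne', (sub_pos.2 hγ).ne'] using this
  have hE'' : intE'' U V = 0 := by
    have : dens U * -intE'' U V / intE U = 0 := by linarith
    simpa [hρ.ne', hε.ne'] using this
  rw [intE'', hρV, zero_div, zero_smul, sub_zero] at hE''
  have hmom : mom V = 0 := by
    have : sq3 (mom V) / dens U = 0 := by
      linarith [sq3_nonneg (mag V), div_nonneg (sq3_nonneg (mom V)) hρ.le]
    simpa [hρ.ne', sq3_eq_zero_iff] using this
  have hmag : mag V = 0 := by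
    rw [← sq3_eq_zero_iff]
    linarith [sq3_nonneg (mag V), div_nonneg (sq3_nonneg (mom V)) hρ.le]
  have htoten : toten V = 0 := by
    have : dens U * (dens V / dens U - intE' U V / intE U) ^ 2 = 0 := by linarith
    simpa [hρ.ne', hε.ne', hρV, intE', hmom, hmag, dot3, sq3] using this
  exact eq_zero_of_dens_mom_mag_toten hρV hmom hmag htoten

lemma entropyFn''_nonneg {γ : ℝ} (hγ : 1 < γ) {U : State} (hU : U ∈ Adm) (V : State) :
    0 ≤ entropyFn'' γ U V := by
  rcases eq_or_ne V 0 with rfl | hV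
  · simp [entropyFn'', intE', intE'', sq3, dot3, dens, mom, mag, toten]
  · exact (entropyFn''_pos hγ hU hV).le

/-- the MHD entropy is convex on the open convex set `G`, with positive
definite Hessian at every admissible state. -/
theorem entropy_convex (γ : ℝ) (hγ : 1 < γ) :
    (IsOpen Adm ∧ Convex ℝ Adm) ∧ ConvexOn ℝ Adm (entropyFn γ) ∧
      ∀ U ∈ Adm, ∀ v : State, v ≠ 0 →
        0 < iteratedFDeriv ℝ 2 (entropyFn γ) U ![v, v] := by
  refine ⟨⟨isOpen_adm, convex_adm⟩,
    convexOn_of_hasLineDerivAt2_nonneg isOpen_adm convex_adm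
      (fun U hU V => hasLineDerivAt_entropyFn hγ.ne' hU V)
      (fun U hU V => hasLineDerivAt_entropyFn' hγ.ne' hU V)
      (fun U hU V => entropyFn''_nonneg hγ hU V),
    fun U hU v hv => ?_⟩
  rw [iteratedFDeriv_two_apply_eq_of_hasLineDerivAt (contDiffAt_entropyFn hγ.ne' hU)
    ((isOpen_adm.eventually_mem hU).mono fun W hW => hasLineDerivAt_entropyFn hγ.ne' hW v)
    (hasLineDerivAt_entropyFn' hγ.ne' hU v)]
  exact entropyFn''_pos hγ hU hv

end IdealMHD
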